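/- arXiv:2103.04407 — 3 statements merged into one kernel-verified Lean document; each statement's English description precedes it below -/
import Mathlib

section
/- Let F_q be a finite field with q ≡ 1 (mod 4) and let n ≥ 1 be an integer with gcd(n+1, q(q²−1)/2) = 1. Let μ ∈ F_q with μ² = −1 (which exists since q ≡ 1 mod 4). Then for every a ∈ F_q \ {μ+2, −μ+2, μ−2, −μ−2}, the matrix I_n + T_n(a)² is invertible (i.e., the code C_n(a) with generator matrix (I_n | T_n(a)) is LCD). -/
/-!
Since `μ ^ 2 = -1`, `1 + T_n(a) ^ 2 = T_n(a + μ) * T_n(a - μ)`, so it suffices that every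
`T_n(c)` is invertible. A kernel vector of `T_n(c)` obeys the three-term recurrence of the
Chebyshev polynomials `S_k(-c)` and vanishes at index `n`, so it is zero unless `S_n(-c) = 0`.
Write `d = x + x⁻¹` with `x` algebraic over `F_q`; then `(x - x⁻¹) S_n(d) = x ^ (n+1) - x⁻¹ ^ (n+1)`,
so a root `d` of `S_n` gives `x ^ (2(n+1)) = 1`. Frobenius swaps or fixes `x` and `x⁻¹`, so also
`x ^ (q² - 1) = 1`, and `gcd(2(n+1), q² - 1) = 2` forces `x = ±1`, i.e. `d = ±2`. But
`S_n(±2) = ±(n+1)`, which is nonzero because the characteristic does not divide `n + 1`.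
-/

/-- The `n × n` tridiagonal Toeplitz matrix with diagonal entries `a` and
sub/super-diagonal entries `b`. -/
def triToeplitz (F : Type*) [Field F] (n : ℕ) (a b : F) :
    Matrix (Fin n) (Fin n) F :=
  Matrix.of fun i j =>
    if (i : ℕ) = (j : ℕ) then a
    else if (i : ℕ) + 1 = (j : ℕ) ∨ (j : ℕ) + 1 = (i : ℕ) then b
    else 0

open Polynomial Polynomial.Chebyshev Matrix

theorem Polynomial.Chebyshev.sub_mul_S_eval_add {R : Type*} [CommRing R] {x y : R}
    (h : x * y = 1) (n : ℕ) :
    (x - y) * (S R n).eval (x + y) = x ^ (n + 1) - y ^ (n + 1) := by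
  induction n using Nat.twoStepInduction with
  | zero => simp
  | one => simp; ring
  | more k ih₀ ih₁ =>
    have hrec : S R ↑(k + 2) = X * S R ↑(k + 1) - S R k := by
      push_cast
      exact S_add_two R k
    rw [hrec, eval_sub, eval_mul, eval_X]
    linear_combination (x + y) * ih₁ - ih₀ + (x ^ (k + 1) - y ^ (k + 1)) * h

namespace FiniteField

variable {F K : Type*} [Field F] [Fintype F] [CommRing K] [Algebra F K]

theorem natCast_ne_zero_of_coprime_card {m : ℕ} (h : m.Coprime (Fintype.card F)) :
    (m : F) ≠ 0 := by
  intro hm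
  have hm' := (ringChar.spec F m).1 hm
  have hq := (ringChar.spec F _).1 (cast_card_eq_zero F)
  exact CharP.ringChar_ne_one (Nat.eq_one_of_dvd_coprimes h hm' hq)

/-- The Frobenius `z ↦ z ^ q` permutes the two roots of a quadratic over `F`. -/
theorem pow_card_sq_eq_self_of_add_of_mul [IsDomain K] {x y : K} {s p : F}
    (hs : x + y = algebraMap F K s) (hp : x * y = algebraMap F K p) :
    x ^ (Fintype.card F ^ 2) = x := by
  set σ := frobeniusAlgHom F K
  have hσs : σ (x + y) = x + y := by rw [hs, AlgHom.commutes]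
  have hσp : σ (x * y) = x * y := by rw [hp, AlgHom.commutes]
  have hroot : (σ x - x) * (σ x - y) = 0 := by
    have h := congrArg σ (show x ^ 2 - (x + y) * x + x * y = 0 by ring)
    rw [map_add, map_sub, map_mul, map_pow, hσs, hσp, map_zero] at h
    linear_combination h
  have hσσ : σ (σ x) = x := by
    rcases mul_eq_zero.1 hroot with h | h
    · rw [sub_eq_zero.1 h, sub_eq_zero.1 h]
    · have hσy : σ y = x := by
        have h' := map_add σ x y
        rw [hσs, sub_eq_zero.1 h] at h'
        linear_combination -h'
      rw [sub_eq_zero.1 h, hσy]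
  simpa [σ, sq, pow_mul] using hσσ

end FiniteField

namespace Polynomial.Chebyshev

variable {F : Type*} [Field F] [Fintype F] {n : ℕ}

theorem eq_two_or_eq_neg_two_of_S_eval_eq_zero
    (hgcd : (2 * (n + 1)).gcd (Fintype.card F ^ 2 - 1) = 2) {d : F}
    (hS : (S F n).eval d = 0) : d = 2 ∨ d = -2 := by
  let K := AlgebraicClosure F
  have hdeg : (X ^ 2 - Polynomial.C (algebraMap F K d) * X + 1).degree = 2 := by
    compute_degree!
  obtain ⟨x, hx⟩ := IsAlgClosed.exists_root _ (by rw [hdeg]; decide)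
  set y := algebraMap F K d - x
  have hsum : x + y = algebraMap F K d := by ring
  have hxy : x * y = 1 := by
    simp only [IsRoot, eval_add, eval_sub, eval_pow, eval_mul, eval_X, eval_C, eval_one] at hx
    linear_combination -hx
  have hpow : x ^ (n + 1) = y ^ (n + 1) := by
    have h := sub_mul_S_eval_add hxy n
    rw [hsum, ← algebraMap_eval_S, hS, map_zero, mul_zero] at h
    exact sub_eq_zero.1 h.symm
  have h₁ : x ^ (2 * (n + 1)) = 1 := by
    rw [two_mul, pow_add]
    nth_rw 2 [hpow]
    rw [← mul_pow, hxy, one_pow]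
  have h₂ : x ^ (Fintype.card F ^ 2 - 1) = 1 := by
    have hq : 1 ≤ Fintype.card F ^ 2 := Nat.one_le_pow _ _ Fintype.card_pos
    apply mul_right_cancel₀ (left_ne_zero_of_mul_eq_one hxy)
    rw [← pow_succ, Nat.sub_add_cancel hq, one_mul,
      FiniteField.pow_card_sq_eq_self_of_add_of_mul hsum (p := 1) (by rw [hxy, map_one])]
  have hx2 : x ^ 2 = 1 := hgcd ▸ pow_gcd_eq_one.2 ⟨h₁, h₂⟩
  have hd2 : (d - 2) * (d + 2) = 0 := by
    apply (algebraMap F K).injective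
    rw [map_zero, map_mul, map_sub, map_add, map_ofNat, ← hsum]
    linear_combination (1 - y ^ 2) * hx2 + (x * y + 3) * hxy
  rcases mul_eq_zero.1 hd2 with h | h
  · exact .inl (sub_eq_zero.1 h)
  · exact .inr (eq_neg_of_add_eq_zero_left h)

theorem S_eval_ne_zero (hchar : (n + 1).Coprime (Fintype.card F))
    (hgcd : (2 * (n + 1)).gcd (Fintype.card F ^ 2 - 1) = 2) (d : F) :
    (S F n).eval d ≠ 0 := by
  intro hS
  have hn : ((n + 1 : ℕ) : F) ≠ 0 := FiniteField.natCast_ne_zero_of_coprime_card hchar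
  push_cast at hn
  rcases eq_two_or_eq_neg_two_of_S_eval_eq_zero hgcd hS with rfl | rfl <;> simp [hn] at hS

end Polynomial.Chebyshev

namespace Fin

def extendByZero {M : Type*} [Zero M] {n : ℕ} (v : Fin n → M) (k : ℤ) : M :=
  if h : 0 ≤ k ∧ k < n then v ⟨k.toNat, by omega⟩ else 0

variable {M : Type*} [AddCommMonoid M] {n : ℕ}

@[simp]
theorem extendByZero_natCast (v : Fin n → M) (i : Fin n) : extendByZero v (i : ℕ) = v i := by
  simp [extendByZero]

theorem extendByZero_of_notMem {v : Fin n → M} {k : ℤ} (hk : ¬(0 ≤ k ∧ k < n)) :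
    extendByZero v k = 0 :=
  dif_neg hk

theorem sum_ite_val_eq_extendByZero (v : Fin n → M) (k : ℤ) :
    ∑ j : Fin n, (if (j : ℤ) = k then v j else 0) = extendByZero v k := by
  by_cases hk : 0 ≤ k ∧ k < n
  · rw [Finset.sum_eq_single ⟨k.toNat, by omega⟩]
    · simp [extendByZero, hk]
    · intro j _ hj
      rw [if_neg]
      exact fun h => hj (Fin.ext (by simp only; omega))
    · simp
  · rw [extendByZero_of_notMem hk]
    refine Finset.sum_eq_zero fun j _ => if_neg ?_
    omega

end Fin

section triToeplitz

open Fin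

variable {F : Type*} [Field F] {n : ℕ}

theorem triToeplitz_mulVec_apply (a b : F) (v : Fin n → F) (i : Fin n) :
    (triToeplitz F n a b *ᵥ v) i =
      b * extendByZero v (i - 1) + a * extendByZero v i + b * extendByZero v (i + 1) := by
  have hentry : ∀ j : Fin n, triToeplitz F n a b i j * v j =
      b * (if (j : ℤ) = i - 1 then v j else 0) + a * (if (j : ℤ) = i then v j else 0) +
        b * (if (j : ℤ) = i + 1 then v j else 0) := by
    intro j
    simp only [triToeplitz, Matrix.of_apply]
    split_ifs <;> first | omega | ring
  simp only [Matrix.mulVec, dotProduct, hentry, Finset.sum_add_distrib, ← Finset.mul_sum,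
    sum_ite_val_eq_extendByZero]

/-- The rows of `triToeplitz F n c 1 *ᵥ v = 0` are the recurrence of `S (-c)`, started from
`v (-1) = 0`. -/
theorem extendByZero_eq_S_eval_mul {c : F} {v : Fin n → F} (hv : triToeplitz F n c 1 *ᵥ v = 0)
    {k : ℕ} (hk : k ≤ n) :
    extendByZero v k = (S F k).eval (-c) * extendByZero v 0 := by
  suffices h : extendByZero v (k - 1 : ℤ) = (S F (k - 1 : ℤ)).eval (-c) * extendByZero v 0 ∧
      extendByZero v k = (S F k).eval (-c) * extendByZero v 0 from h.2
  induction k with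
  | zero => simp [extendByZero_of_notMem]
  | succ k ih =>
    obtain ⟨ih₁, ih₂⟩ := ih (by omega)
    have hrow := congrFun hv ⟨k, by omega⟩
    rw [triToeplitz_mulVec_apply, Pi.zero_apply] at hrow
    push_cast at hrow ⊢
    refine ⟨by simpa using ih₂, ?_⟩
    rw [S_add_one, eval_sub, eval_mul, eval_X]
    linear_combination hrow - ih₁ - c * ih₂

theorem isUnit_triToeplitz {c : F} (hc : (S F n).eval (-c) ≠ 0) :
    IsUnit (triToeplitz F n c 1) := by
  rw [isUnit_iff_isUnit_det, isUnit_iff_ne_zero]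
  intro hdet
  obtain ⟨v, hv0, hv⟩ := exists_mulVec_eq_zero_iff.mpr hdet
  have hn : extendByZero v n = 0 := extendByZero_of_notMem (by omega)
  rw [extendByZero_eq_S_eval_mul hv le_rfl] at hn
  have h0 : extendByZero v 0 = 0 := (mul_eq_zero.1 hn).resolve_left hc
  refine hv0 (funext fun i => ?_)
  rw [← extendByZero_natCast v i, extendByZero_eq_S_eval_mul hv i.is_le', h0, mul_zero,
    Pi.zero_apply]

theorem triToeplitz_add_smul_one (a d b : F) :
    triToeplitz F n a b + d • 1 = triToeplitz F n (a + d) b := by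
  ext i j
  by_cases h : i = j
  · simp [triToeplitz, h]
  · simp [triToeplitz, h, Fin.val_ne_of_ne h]

end triToeplitz

theorem gcd_two_mul_sq_sub_one_eq_two {k q : ℕ} (hq : Odd q)
    (h : k.Coprime ((q ^ 2 - 1) / 2)) : (2 * k).gcd (q ^ 2 - 1) = 2 := by
  obtain ⟨m, hm⟩ := (Nat.Odd.sub_odd hq.pow odd_one).two_dvd
  rw [hm, Nat.mul_div_cancel_left _ two_pos] at h
  rw [hm, Nat.gcd_mul_left, h, mul_one]

theorem stmt_11_general (F : Type*) [Field F] [Fintype F]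
    (n : ℕ)
    (hq : Fintype.card F % 4 = 1)
    (hcop : Nat.gcd (n + 1)
      (Fintype.card F * (Fintype.card F ^ 2 - 1) / 2) = 1)
    (μ : F) (hμ : μ ^ 2 = -1) :
    ∀ a : F, a ∉ ({μ + 2, -μ + 2, μ - 2, -μ - 2} : Set F) →
      IsUnit ((1 : Matrix (Fin n) (Fin n) F) + (triToeplitz F n a 1) ^ 2) := by
  intro a _
  have hodd : Odd (Fintype.card F) := Nat.odd_iff.2 (by omega)
  have hcop' : (n + 1).Coprime (Fintype.card F * ((Fintype.card F ^ 2 - 1) / 2)) := by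
    rwa [← Nat.mul_div_assoc _ (Nat.Odd.sub_odd hodd.pow odd_one).two_dvd]
  obtain ⟨hchar, hhalf⟩ := Nat.coprime_mul_iff_right.1 hcop'
  have hS : ∀ d : F, (S F n).eval d ≠ 0 :=
    S_eval_ne_zero hchar (gcd_two_mul_sq_sub_one_eq_two hodd hhalf)
  have hcomm : Commute (triToeplitz F n a 1) (μ • 1) := (Commute.one_right _).smul_right μ
  have hfac : 1 + triToeplitz F n a 1 ^ 2 =
      triToeplitz F n (a + μ) 1 * triToeplitz F n (a - μ) 1 := by
    rw [← triToeplitz_add_smul_one, sub_eq_add_neg, ← triToeplitz_add_smul_one, neg_smul,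
      ← sub_eq_add_neg, ← hcomm.mul_self_sub_mul_self_eq, smul_mul_smul, mul_one, ← sq μ, hμ,
      neg_one_smul, sub_neg_eq_add, sq, add_comm]
  rw [hfac]
  exact (isUnit_triToeplitz (hS _)).mul (isUnit_triToeplitz (hS _))

/-- `q ≡ 1 (mod 4)` and `gcd(n+1, q(q^2-1)/2) = 1`: for `μ ∈ F_q` with
`μ^2 = -1`, the code `C_n(a)` is LCD for all `a ∉ {μ+2, -μ+2, μ-2, -μ-2}`. -/
theorem stmt_11 (F : Type*) [Field F] [Fintype F]
    (n : ℕ) (hn : 1 ≤ n)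
    (hq : Fintype.card F % 4 = 1)
    (hcop : Nat.gcd (n + 1)
      (Fintype.card F * (Fintype.card F ^ 2 - 1) / 2) = 1)
    (μ : F) (hμ : μ ^ 2 = -1) :
    ∀ a : F, a ∉ ({μ + 2, -μ + 2, μ - 2, -μ - 2} : Set F) →
      IsUnit ((1 : Matrix (Fin n) (Fin n) F) + (triToeplitz F n a 1) ^ 2) :=
  stmt_11_general F n hq hcop μ hμ
end

section
/- Let F_q be a finite field with q ≡ 3 (mod 4) and let n ≥ 1 be an integer such that gcd(n+1, q) = 1 and gcd(n+1, (q⁴−1)/2) divides (q−1)/2. Then for every a ∈ F_q the matrix I_n + T_n(a)² is invertible (i.e., the code C_n(a) with generator matrix (I_n | T_n(a)) is LCD for all a ∈ F_q). -/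
lemma sum_ite_cast_eq {M : Type*} [AddCommMonoid M] {n : ℕ} (c : ℕ) (w : Fin n → M) :
    ∑ j : Fin n, (if (j : ℕ) = c then w j else 0)
      = if h : c < n then w ⟨c, h⟩ else 0 := by
  split
  next h =>
    rw [Finset.sum_eq_single (⟨c, h⟩ : Fin n)]
    · simp
    · intro j _ hj
      rw [if_neg]
      simpa [Fin.ext_iff] using hj
    · simp
  next h =>
    exact Finset.sum_eq_zero fun j _ => if_neg (by omega)

lemma triToeplitz_mulVec {F : Type*} [Field F] {n : ℕ} (a : F) (v : Fin n → F) (i : Fin n) :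
    (triToeplitz F n a 1).mulVec v i
      = (if h : 1 ≤ (i : ℕ) then v ⟨(i : ℕ) - 1, by omega⟩ else 0)
        + a * v i
        + (if h : (i : ℕ) + 1 < n then v ⟨(i : ℕ) + 1, h⟩ else 0) := by
  classical
  have hpt : ∀ j : Fin n, triToeplitz F n a 1 i j * v j
      = (if (j : ℕ) = (i : ℕ) then a * v j else 0)
        + (if (j : ℕ) = (i : ℕ) - 1 ∧ 1 ≤ (i : ℕ) then v j else 0)
        + (if (j : ℕ) = (i : ℕ) + 1 then v j else 0) := by
    intro j
    simp only [triToeplitz, Matrix.of_apply]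
    split_ifs <;> (try omega) <;> ring
  have : (triToeplitz F n a 1).mulVec v i = ∑ j : Fin n, triToeplitz F n a 1 i j * v j := rfl
  rw [this, Finset.sum_congr rfl (fun j _ => hpt j), Finset.sum_add_distrib,
    Finset.sum_add_distrib]
  have h1 : ∑ j : Fin n, (if (j : ℕ) = (i : ℕ) then a * v j else 0) = a * v i := by
    rw [sum_ite_cast_eq (i : ℕ) (fun j => a * v j), dif_pos i.isLt]
  have h3 : ∑ j : Fin n, (if (j : ℕ) = (i : ℕ) + 1 then v j else 0)
      = if h : (i : ℕ) + 1 < n then v ⟨(i : ℕ) + 1, h⟩ else 0 := sum_ite_cast_eq _ _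
  have h2 : ∑ j : Fin n, (if (j : ℕ) = (i : ℕ) - 1 ∧ 1 ≤ (i : ℕ) then v j else 0)
      = if h : 1 ≤ (i : ℕ) then v ⟨(i : ℕ) - 1, by omega⟩ else 0 := by
    by_cases hi : 1 ≤ (i : ℕ)
    · simp only [hi, and_true, dif_pos]
      rw [sum_ite_cast_eq ((i : ℕ) - 1) v, dif_pos (show (i : ℕ) - 1 < n by omega)]
    · rw [dif_neg hi]
      exact Finset.sum_eq_zero fun j _ => if_neg (by omega)
  rw [h1, h2, h3]
  ring

/-- Chebyshev-like sequence: `s 0 = 0`, `s 1 = 1`, `s (k+2) = x * s (k+1) - s k`. -/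
def cheb {K : Type*} [Field K] (x : K) : ℕ → K
  | 0 => 0
  | 1 => 1
  | (k + 2) => x * cheb x (k + 1) - cheb x k

/-- `q ≡ 3 (mod 4)`, `gcd(n+1,q) = 1` and `gcd(n+1,(q^4-1)/2) ∣ (q-1)/2`:
the code `C_n(a)` is LCD for all `a ∈ F_q`. -/
theorem stmt_12 (F : Type*) [Field F] [Fintype F]
    (n : ℕ) (hn : 1 ≤ n)
    (hq : Fintype.card F % 4 = 3)
    (hcop1 : Nat.gcd (n + 1) (Fintype.card F) = 1)
    (hcop2 : Nat.gcd (n + 1) ((Fintype.card F ^ 4 - 1) / 2) ∣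
      (Fintype.card F - 1) / 2) :
    ∀ a : F,
      IsUnit ((1 : Matrix (Fin n) (Fin n) F) + (triToeplitz F n a 1) ^ 2) := by
  classical
  intro a
  by_contra hM
  set q := Fintype.card F with hqdef
  have hq1 : 1 ≤ q := Fintype.card_pos
  have hq2 : q % 2 = 1 := by omega
  have hq3 : 3 ≤ q := by omega
  -- characteristic
  set p := ringChar F with hpdef
  haveI hchF : CharP F p := ringChar.charP F
  have hp : p.Prime := CharP.char_is_prime F p
  haveI hpF : Fact p.Prime := ⟨hp⟩
  obtain ⟨m, -, hcard⟩ := FiniteField.card F p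
  have hm1 : 1 ≤ (m : ℕ) := m.2
  have hpq : p ∣ q := by
    rw [hqdef, hcard]
    exact dvd_pow_self p (by omega)
  have hpne2 : p ≠ 2 := by
    intro hp2
    rw [hp2] at hpq
    omega
  -- determinant is zero over F
  have hdet0 : ((1 : Matrix (Fin n) (Fin n) F) + triToeplitz F n a 1 ^ 2).det = 0 := by
    by_contra h
    exact hM ((Matrix.isUnit_iff_isUnit_det _).2 (isUnit_iff_ne_zero.2 h))
  -- move to the algebraic closure
  set K := AlgebraicClosure F with hKdef
  haveI hchK : CharP K p := charP_of_injective_algebraMap (algebraMap F K).injective p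
  set f : F →+* K := (algebraMap F K : F →+* K) with hfdef
  set T : Matrix (Fin n) (Fin n) K := triToeplitz K n (f a) 1 with hTdef
  have hTmap : f.mapMatrix (triToeplitz F n a 1) = T := by
    ext i j
    simp only [RingHom.mapMatrix_apply, Matrix.map_apply, triToeplitz, Matrix.of_apply, hTdef]
    split_ifs <;> simp
  have hdetK : ((1 : Matrix (Fin n) (Fin n) K) + T ^ 2).det = 0 := by
    have h1 : f.mapMatrix ((1 : Matrix (Fin n) (Fin n) F) + triToeplitz F n a 1 ^ 2)
        = (1 : Matrix (Fin n) (Fin n) K) + T ^ 2 := by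
      rw [map_add, map_one, map_pow, hTmap]
    have h2 := f.map_det ((1 : Matrix (Fin n) (Fin n) F) + triToeplitz F n a 1 ^ 2)
    rw [hdet0, map_zero, h1] at h2
    exact h2.symm
  -- a square root of -1 and an eigenvalue
  obtain ⟨i0, hi0⟩ := IsAlgClosed.exists_pow_nat_eq (-1 : K) (n := 2) (by norm_num)
  have hcomm : ∀ c : K, Commute T (c • (1 : Matrix (Fin n) (Fin n) K)) := by
    intro c
    show T * (c • 1) = (c • 1) * T
    rw [Matrix.mul_smul, Matrix.smul_mul, mul_one, one_mul]
  have hfac : (1 : Matrix (Fin n) (Fin n) K) + T ^ 2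
      = (T + i0 • 1) * (T - i0 • 1) := by
    have h2 : (i0 • (1 : Matrix (Fin n) (Fin n) K)) ^ 2 = -1 := by
      rw [smul_pow, one_pow, hi0, neg_smul, one_smul]
    have := (hcomm i0).sq_sub_sq
    rw [h2] at this
    rw [← this, sub_neg_eq_add, add_comm]
  have hone : ∃ ν : K, ν ^ 2 = -1 ∧ ∃ v : Fin n → K, v ≠ 0 ∧ T.mulVec v = ν • v := by
    have hd : (T + i0 • 1).det * (T - i0 • 1).det = 0 := by
      rw [← Matrix.det_mul, ← hfac, hdetK]
    rcases mul_eq_zero.mp hd with h | h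
    · obtain ⟨v, hv0, hv⟩ := (Matrix.exists_mulVec_eq_zero_iff).mpr h
      refine ⟨-i0, by rw [neg_pow]; simp [hi0], v, hv0, ?_⟩
      have hvv := hv
      rw [Matrix.add_mulVec, Matrix.smul_mulVec, Matrix.one_mulVec] at hvv
      rw [neg_smul]
      exact eq_neg_of_add_eq_zero_left hvv
    · obtain ⟨v, hv0, hv⟩ := (Matrix.exists_mulVec_eq_zero_iff).mpr h
      refine ⟨i0, hi0, v, hv0, ?_⟩
      have := hv
      rw [Matrix.sub_mulVec, Matrix.smul_mulVec, Matrix.one_mulVec] at this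
      rw [← sub_eq_zero]
      exact this
  obtain ⟨ν, hν2, v, hv0, hTv⟩ := hone
  set x : K := ν - f a with hxdef
  -- the padded eigenvector sequence
  set u : ℕ → K := fun k => if h : 1 ≤ k ∧ k ≤ n then v ⟨k - 1, by omega⟩ else 0 with hudef
  have hrec : ∀ k, k < n → u (k + 2) = x * u (k + 1) - u k := by
    intro k hk
    have hrow := congrFun hTv ⟨k, hk⟩
    rw [triToeplitz_mulVec] at hrow
    simp only [Pi.smul_apply, smul_eq_mul] at hrow
    have hu1 : u (k + 1) = v ⟨k, hk⟩ := by
      have hc : 1 ≤ k + 1 ∧ k + 1 ≤ n := ⟨by omega, by omega⟩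
      simp only [hudef, dif_pos hc]
      exact congrArg v (Fin.ext (by simp))
    have hu0 : u k = (if h : 1 ≤ k then v ⟨k - 1, by omega⟩ else 0) := by
      by_cases h1 : 1 ≤ k
      · have hc : 1 ≤ k ∧ k ≤ n := ⟨h1, by omega⟩
        simp only [hudef, dif_pos hc, dif_pos h1]
      · have hc : ¬(1 ≤ k ∧ k ≤ n) := by omega
        simp only [hudef, dif_neg hc, dif_neg h1]
    have hu2 : u (k + 2) = (if h : k + 1 < n then v ⟨k + 1, h⟩ else 0) := by
      by_cases h1 : k + 1 < n
      · have hc : 1 ≤ k + 2 ∧ k + 2 ≤ n := ⟨by omega, by omega⟩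
        simp only [hudef, dif_pos hc, dif_pos h1]
        exact congrArg v (Fin.ext (by simp))
      · have hc : ¬(1 ≤ k + 2 ∧ k + 2 ≤ n) := by omega
        simp only [hudef, dif_neg hc, dif_neg h1]
    rw [hu0, hu1, hu2]
    rw [hxdef]
    linear_combination hrow
  have hutop : u (n + 1) = 0 := by
    have hc : ¬(1 ≤ n + 1 ∧ n + 1 ≤ n) := by omega
    simp only [hudef, dif_neg hc]
  set s : ℕ → K := cheb x with hsdef
  have hscale : ∀ k, k ≤ n → u k = u 1 * s k ∧ u (k + 1) = u 1 * s (k + 1) := by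
    intro k
    induction k with
    | zero =>
      intro _
      constructor
      · show u 0 = u 1 * s 0
        have hc : ¬(1 ≤ 0 ∧ 0 ≤ n) := by omega
        simp only [hudef, dif_neg hc]
        show (0 : K) = u 1 * cheb x 0
        simp [cheb]
      · show u 1 = u 1 * s 1
        show u 1 = u 1 * cheb x 1
        simp [cheb]
    | succ k ih =>
      intro hk
      obtain ⟨h1, h2⟩ := ih (by omega)
      refine ⟨h2, ?_⟩
      rw [hrec k (by omega), show s (k + 1 + 1) = x * cheb x (k + 1) - cheb x k from rfl,
        h1, h2]
      show x * (u 1 * cheb x (k + 1)) - u 1 * cheb x k = _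
      ring
  have hu1ne : u 1 ≠ 0 := by
    intro h0
    apply hv0
    funext j
    have hj : (j : ℕ) ≤ n := by omega
    have := (hscale j (by omega)).2
    rw [h0, zero_mul] at this
    have hv : u ((j : ℕ) + 1) = v j := by
      have hc : 1 ≤ (j : ℕ) + 1 ∧ (j : ℕ) + 1 ≤ n := ⟨by omega, by omega⟩
      simp only [hudef, dif_pos hc]
      exact congrArg v (Fin.ext (by simp))
    rw [← hv, this]
    rfl
  have hs0 : s (n + 1) = 0 := by
    have := (hscale n le_rfl).2
    rw [hutop] at this
    rcases mul_eq_zero.mp this.symm with h | h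
    · exact absurd h hu1ne
    · exact h
  rw [hsdef] at hs0
  -- a root θ of t² - x t + 1
  obtain ⟨θ, hθroot⟩ := IsAlgClosed.exists_root
    (Polynomial.X ^ 2 - Polynomial.C x * Polynomial.X + 1 : Polynomial K)
    (by
      have hdeg2 : (Polynomial.X ^ 2 - Polynomial.C x * Polynomial.X + 1 :
          Polynomial K).degree = 2 := by
        compute_degree!
      rw [hdeg2]
      norm_num)
  have hθ : θ ^ 2 - x * θ + 1 = 0 := by
    simpa using hθroot
  have hθ0 : θ ≠ 0 := by
    rintro rfl
    simp at hθ
  have hθτ : θ * (x - θ) = 1 := by linear_combination -hθ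
  have hτ0 : x - θ ≠ 0 := fun h => by rw [h, mul_zero] at hθτ; exact zero_ne_one hθτ
  have hτ : (x - θ) ^ 2 - x * (x - θ) + 1 = 0 := by linear_combination hθ
  -- natural number cast n+1 is nonzero
  have hn1K : ((n : K) + 1) ≠ 0 := by
    intro h
    have hF : ((n : F) + 1) = 0 := by
      apply (algebraMap F K).injective
      rw [map_add, map_natCast, map_one, map_zero]
      exact h
    have : (((n + 1 : ℕ)) : F) = 0 := by push_cast; exact hF
    have hpd : p ∣ n + 1 := (CharP.cast_eq_zero_iff F p (n + 1)).mp this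
    have : p ∣ Nat.gcd (n + 1) q := Nat.dvd_gcd hpd hpq
    rw [hcop1] at this
    exact hp.one_lt.ne' (Nat.dvd_one.mp this)
  -- case analysis on θ = x - θ
  by_cases hdeg : θ = x - θ
  · -- double root: θ² = 1 and cheb x k = k θ^{k+1}
    have hθ2 : θ ^ 2 = 1 := by
      rw [sq]
      calc θ * θ = θ * (x - θ) := by rw [← hdeg]
        _ = 1 := hθτ
    have hform : ∀ k : ℕ, cheb x k = (k : K) * θ ^ (k + 1)
        ∧ cheb x (k + 1) = ((k : K) + 1) * θ ^ (k + 2) := by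
      intro k
      induction k with
      | zero =>
        constructor
        · simp [cheb]
        · norm_num [cheb, hθ2]
      | succ k ih =>
        obtain ⟨h1, h2⟩ := ih
        refine ⟨by push_cast; exact h2, ?_⟩
        show x * cheb x (k + 1) - cheb x k = _
        rw [h1, h2]
        have hx2 : x = θ + θ := by linear_combination -hdeg
        push_cast
        rw [hx2]
        linear_combination (k : K) * θ ^ (k + 1) * hθ2
    have := (hform n).2
    rw [hs0] at this
    rcases mul_eq_zero.mp this.symm with h | h
    · exact hn1K h
    · exact hθ0 (pow_eq_zero_iff (by omega) |>.mp h)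
  · -- simple roots: θ^{2(n+1)} = 1
    have hform : ∀ k : ℕ, cheb x k * (θ - (x - θ)) = θ ^ k - (x - θ) ^ k
        ∧ cheb x (k + 1) * (θ - (x - θ)) = θ ^ (k + 1) - (x - θ) ^ (k + 1) := by
      intro k
      induction k with
      | zero =>
        constructor
        · simp [cheb]
        · show cheb x 1 * _ = _
          simp [cheb]
      | succ k ih =>
        obtain ⟨h1, h2⟩ := ih
        refine ⟨h2, ?_⟩
        show (x * cheb x (k + 1) - cheb x k) * (θ - (x - θ)) = _
        linear_combination x * h2 - h1 - θ ^ k * hθ + (x - θ) ^ k * hτ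
    have hsn := (hform (n + 1)).1
    rw [hs0, zero_mul] at hsn
    have hpow : θ ^ (n + 1) = (x - θ) ^ (n + 1) := by linear_combination -hsn
    have hroot : θ ^ (2 * (n + 1)) = 1 := by
      calc θ ^ (2 * (n + 1)) = θ ^ (n + 1) * θ ^ (n + 1) := by rw [two_mul, pow_add]
        _ = θ ^ (n + 1) * (x - θ) ^ (n + 1) := by rw [← hpow]
        _ = (θ * (x - θ)) ^ (n + 1) := (mul_pow _ _ _).symm
        _ = 1 := by rw [hθτ, one_pow]
    -- Frobenius: θ ∈ F_{q⁴}
    have hfrob : ∀ (j : ℕ) (y z : K), (y + z) ^ q ^ j = y ^ q ^ j + z ^ q ^ j := by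
      intro j y z
      have hqe : q ^ j = p ^ ((m : ℕ) * j) := by rw [hqdef, hcard, ← pow_mul]
      rw [hqe]
      exact add_pow_expChar_pow y z p ((m : ℕ) * j)
    have hqodd : ∀ j : ℕ, 1 ≤ j → Odd (q ^ j) := by
      intro j _
      exact (Nat.odd_iff.mpr hq2).pow
    -- ν^q = -ν
    have hνq : ν ^ q = -ν := by
      have h4 : q = 4 * (q / 4) + 3 := by omega
      calc ν ^ q = ν ^ (4 * (q / 4)) * ν ^ 3 := by rw [← pow_add, ← h4]
        _ = ((ν ^ 2) ^ 2) ^ (q / 4) * (ν ^ 2 * ν) := by ring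
        _ = ((-1 : K) ^ 2) ^ (q / 4) * ((-1) * ν) := by rw [hν2]
        _ = -ν := by rw [neg_one_sq, one_pow, one_mul, neg_one_mul]
    -- (f a)^q = f a
    have haq : (f a) ^ q = f a := by
      rw [← map_pow]
      congr 1
      exact FiniteField.pow_card a
    -- x^{q²} = x
    have hνq2 : ν ^ (q ^ 2) = ν := by
      have hqo : Odd q := Nat.odd_iff.mpr hq2
      rw [sq, pow_mul, hνq, hqo.neg_pow, hνq, neg_neg]
    have haq2 : (f a) ^ (q ^ 2) = f a := by
      rw [sq, pow_mul, haq, haq]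
    have hxq2 : x ^ (q ^ 2) = x := by
      have hx' : x = ν + (-(f a)) := by rw [hxdef]; ring
      rw [hx', hfrob 2, hνq2, Odd.neg_pow (hqodd 2 (by omega)), haq2]
    -- θ^{q²} is a root of the same quadratic
    have hyroot : (θ ^ (q ^ 2)) ^ 2 - x * (θ ^ (q ^ 2)) + 1 = 0 := by
      have hθ' : θ ^ 2 + 1 = x * θ := by linear_combination hθ
      have := congrArg (· ^ (q ^ 2)) hθ'
      rw [hfrob 2, one_pow, mul_pow, hxq2, ← pow_mul, mul_comm 2 (q ^ 2), pow_mul] at this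
      linear_combination this
    have hcases : θ ^ (q ^ 2) = θ ∨ θ ^ (q ^ 2) = x - θ := by
      have : (θ ^ (q ^ 2) - θ) * (θ ^ (q ^ 2) - (x - θ)) = 0 := by
        linear_combination hyroot + hθτ
      rcases mul_eq_zero.mp this with h | h
      · exact Or.inl (by linear_combination h)
      · exact Or.inr (by linear_combination h)
    have hτq2 : (x - θ) ^ (q ^ 2) = x - θ ^ (q ^ 2) := by
      have hx' : x - θ = x + (-θ) := by ring
      rw [hx', hfrob 2, Odd.neg_pow (hqodd 2 (by omega)), hxq2]
      ring
    have hθq4 : θ ^ (q ^ 4) = θ := by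
      have h42 : q ^ 4 = q ^ 2 * q ^ 2 := by ring
      rw [h42, pow_mul]
      rcases hcases with h | h
      · rw [h, h]
      · rw [h, hτq2, h]
        ring
    have hθq4' : θ ^ (q ^ 4 - 1) = 1 := by
      have h1 : θ ^ (q ^ 4 - 1) * θ = θ := by
        rw [← pow_succ]
        have : q ^ 4 - 1 + 1 = q ^ 4 := by
          have : 1 ≤ q ^ 4 := Nat.one_le_pow _ _ (by omega)
          omega
        rw [this, hθq4]
      calc θ ^ (q ^ 4 - 1) = θ ^ (q ^ 4 - 1) * θ * θ⁻¹ := by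
            rw [mul_assoc, mul_inv_cancel₀ hθ0, mul_one]
        _ = θ * θ⁻¹ := by rw [h1]
        _ = 1 := mul_inv_cancel₀ hθ0
    -- order bookkeeping
    have hd1 : orderOf θ ∣ 2 * (n + 1) := orderOf_dvd_of_pow_eq_one hroot
    have hd2 : orderOf θ ∣ q ^ 4 - 1 := orderOf_dvd_of_pow_eq_one hθq4'
    have hq4odd : q ^ 4 % 2 = 1 := Nat.odd_iff.mp (hqodd 4 (by omega))
    have hhalf : 2 * ((q ^ 4 - 1) / 2) = q ^ 4 - 1 := by omega
    have hgcd : Nat.gcd (2 * (n + 1)) (q ^ 4 - 1)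
        = 2 * Nat.gcd (n + 1) ((q ^ 4 - 1) / 2) := by
      conv_lhs => rw [← hhalf]
      exact Nat.gcd_mul_left 2 (n + 1) ((q ^ 4 - 1) / 2)
    have hdq : orderOf θ ∣ q - 1 := by
      have h1 : orderOf θ ∣ 2 * Nat.gcd (n + 1) ((q ^ 4 - 1) / 2) := by
        rw [← hgcd]
        exact Nat.dvd_gcd hd1 hd2
      have h2 : 2 * Nat.gcd (n + 1) ((q ^ 4 - 1) / 2) ∣ 2 * ((q - 1) / 2) :=
        mul_dvd_mul_left 2 hcop2
      have h3 : 2 * ((q - 1) / 2) = q - 1 := by omega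
      exact h1.trans (h3 ▸ h2)
    have hθq : θ ^ q = θ := by
      have h1 : θ ^ (q - 1) = 1 := orderOf_dvd_iff_pow_eq_one.mp hdq
      calc θ ^ q = θ ^ (q - 1 + 1) := by congr 1; omega
        _ = θ ^ (q - 1) * θ := pow_succ _ _
        _ = θ := by rw [h1, one_mul]
    have hτq : (x - θ) ^ q = x - θ := by
      have h1 : (x - θ) ^ q * θ ^ q = 1 := by
        rw [← mul_pow, mul_comm, hθτ, one_pow]
      rw [hθq] at h1
      have h2 : (x - θ) * θ = 1 := by rw [mul_comm]; exact hθτ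
      exact mul_right_cancel₀ hθ0 (h1.trans h2.symm)
    have hxq : x ^ q = x := by
      have hx' : x = θ + (x - θ) := by ring
      calc x ^ q = (θ + (x - θ)) ^ q := by rw [← hx']
        _ = θ ^ q + (x - θ) ^ q := by
              have h := hfrob 1 θ (x - θ)
              rwa [pow_one] at h
        _ = θ + (x - θ) := by rw [hθq, hτq]
        _ = x := by ring
    have hνfix : ν ^ q = ν := by
      have hν' : ν = x + f a := by rw [hxdef]; ring
      calc ν ^ q = (x + f a) ^ q := by rw [← hν']
        _ = x ^ q + (f a) ^ q := by
              have h := hfrob 1 x (f a)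
              rwa [pow_one] at h
        _ = x + f a := by rw [hxq, haq]
        _ = ν := by rw [← hν']
    -- contradiction: ν = -ν with ν ≠ 0 and char ≠ 2
    have hνν : ν = -ν := by rw [← hνq, hνfix]
    have hν0 : ν ≠ 0 := by
      intro h
      rw [h] at hν2
      norm_num at hν2
    have h2ν : (2 : K) * ν = 0 := by linear_combination hνν
    rcases mul_eq_zero.mp h2ν with h | h
    · have : (2 : K) = ((2 : ℕ) : K) := by norm_num
      rw [this] at h
      have hpd : p ∣ 2 := (CharP.cast_eq_zero_iff K p 2).mp h
      have : p = 2 := (Nat.prime_dvd_prime_iff_eq hp Nat.prime_two).mp hpd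
      exact hpne2 this
    · exact hν0 h
end

section
/- Let F_q be a finite field of odd characteristic p, a, b ∈ F_q with b ≠ 0, and n ≥ 2 an integer. Write n+1 = p^r·(m+1) with r ≥ 1 and p not dividing m+1. Let μ be an element of an algebraic closure of F_q with μ² = −1 and let θ be a primitive 2(m+1)-th root of unity in that closure; identify F_q with its image in the closure. Then: (i) if m > 0, the code Ĉ_n(a,b) with generator matrix (I_n | T̂_n(a,b)) is LCD — equivalently, I_n + T̂_n(a,b)² is invertible — if and only if a/b ∉ { −μ/b+2, −μ/b−2, μ/b+2, μ/b−2 } ∪ { −μ/b + θ^i + θ^{−i} : 1 ≤ i ≤ m } ∪ { μ/b + θ^i + θ^{−i} : 1 ≤ i ≤ m }; (ii) if m = 0, Ĉ_n(a,b) is LCD if and only if a/b ∉ { −μ/b+2, −μ/b−2, μ/b+2, μ/b−2 }. -/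
open Matrix Polynomial

section Aux
variable {K : Type*} [Field K]

def triMat (n : ℕ) (x c : K) : Matrix (Fin n) (Fin n) K :=
  Matrix.of fun i j =>
    if (i : ℕ) = (j : ℕ) then x
    else if (i : ℕ) + 1 = (j : ℕ) ∨ (j : ℕ) + 1 = (i : ℕ) then c
    else 0

def dRec (x s : K) : ℕ → K
  | 0 => 1
  | 1 => x
  | n+2 => x * dRec x s (n+1) - s * dRec x s n

lemma two_step {P : ℕ → Prop} (h0 : P 0) (h1 : P 1)
    (hstep : ∀ n, P n → P (n+1) → P (n+2)) : ∀ n, P n := by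
  have h : ∀ n, P n ∧ P (n+1) := by
    intro n; induction n with
    | zero => exact ⟨h0, h1⟩
    | succ k ih => exact ⟨ih.2, hstep k ih.1 ih.2⟩
  exact fun n => (h n).1

lemma triMat_apply (n : ℕ) (x c : K) (i j : Fin n) :
    triMat n x c i j =
      if (i : ℕ) = (j : ℕ) then x
      else if (i : ℕ) + 1 = (j : ℕ) ∨ (j : ℕ) + 1 = (i : ℕ) then c
      else 0 := rfl

lemma tri_sub1 (n : ℕ) (x c : K) :
    (triMat (n+1) x c).submatrix Fin.succ Fin.succ = triMat n x c := by
  ext i j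
  simp only [submatrix_apply, triMat_apply, Fin.val_succ]
  have h1 : (i:ℕ)+1 = (j:ℕ)+1 ↔ (i:ℕ)=(j:ℕ) := by omega
  have h2 : ((i:ℕ)+1)+1 = (j:ℕ)+1 ∨ ((j:ℕ)+1)+1 = (i:ℕ)+1 ↔
      ((i:ℕ)+1=(j:ℕ) ∨ (j:ℕ)+1=(i:ℕ)) := by omega
  rw [if_congr h1 rfl rfl, if_congr h2 rfl rfl]

lemma det_triMat (x c : K) : ∀ n, (triMat n x c).det = dRec x (c^2) n := by
  apply two_step
  · simp [dRec]
  · simp [dRec, triMat, Matrix.det_fin_one]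
  · intro n ih0 ih1
    rw [Matrix.det_succ_row_zero]
    rw [Fin.sum_univ_succ, Fin.sum_univ_succ]
    have e00 : triMat (n+2) x c 0 0 = x := by rw [triMat_apply]; norm_num
    have e01 : triMat (n+2) x c 0 (Fin.succ 0) = c := by rw [triMat_apply]; norm_num
    have e0k : ∀ i : Fin n, triMat (n+2) x c 0 i.succ.succ = 0 := by
      intro i; rw [triMat_apply]; norm_num
    have hsub0 : (0 : Fin (n+2)).succAbove = Fin.succ := Fin.succAbove_zero
    simp only [e00, e01, e0k, hsub0, mul_zero, zero_mul, Finset.sum_const_zero, add_zero,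
      tri_sub1, ih1]
    have hN : ((triMat (n+2) x c).submatrix Fin.succ (Fin.succ 0).succAbove).det
        = c * dRec x (c^2) n := by
      rw [Matrix.det_succ_column_zero, Fin.sum_univ_succ]
      have eN0 : (triMat (n+2) x c).submatrix Fin.succ (Fin.succ 0).succAbove 0 0 = c := by
        have : (Fin.succ 0 : Fin (n+2)).succAbove 0 = 0 := by
          rw [Fin.succAbove_of_castSucc_lt]
          · rfl
          · simp [Fin.lt_def]
        simp only [submatrix_apply, this]
        rw [triMat_apply]; norm_num
      have eNk : ∀ i : Fin n,
          (triMat (n+2) x c).submatrix Fin.succ (Fin.succ 0).succAbove i.succ 0 = 0 := by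
        intro i
        have : (Fin.succ 0 : Fin (n+2)).succAbove 0 = 0 := by
          rw [Fin.succAbove_of_castSucc_lt]
          · rfl
          · simp [Fin.lt_def]
        simp only [submatrix_apply, this]
        rw [triMat_apply]; norm_num
      have hsub2 : (((triMat (n+2) x c).submatrix Fin.succ (Fin.succ 0).succAbove).submatrix
          (0 : Fin (n+1)).succAbove Fin.succ) = triMat n x c := by
        ext i j
        have hj : (Fin.succ 0 : Fin (n+2)).succAbove j.succ = j.succ.succ := by
          rw [Fin.succAbove_of_le_castSucc]
          simp [Fin.le_def]
        simp only [submatrix_apply, Fin.succAbove_zero, hj, triMat_apply, Fin.val_succ]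
        have h1 : (i:ℕ)+1+1 = (j:ℕ)+1+1 ↔ (i:ℕ)=(j:ℕ) := by omega
        have h2 : ((i:ℕ)+1+1)+1 = (j:ℕ)+1+1 ∨ ((j:ℕ)+1+1)+1 = (i:ℕ)+1+1 ↔
            ((i:ℕ)+1=(j:ℕ) ∨ (j:ℕ)+1=(i:ℕ)) := by omega
        rw [if_congr h1 rfl rfl, if_congr h2 rfl rfl]
      simp only [eN0, eNk, hsub2, mul_zero, zero_mul, Finset.sum_const_zero, add_zero, ih0]
      norm_num
    rw [hN, dRec]
    simp only [Fin.val_zero, Fin.val_succ, pow_zero, pow_one]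
    ring

lemma dRec_pell (B z x : K) (hx : x * z = B * (z^2+1)) :
    ∀ n, (z^2 - 1) * dRec x (B^2) n * z^n = B^n * (z^(2*(n+1)) - 1) := by
  apply two_step
  · simp [dRec]
  · show (z^2-1) * dRec x (B^2) 1 * z^1 = B^1 * (z^(2*(1+1)) - 1)
    simp only [dRec]
    linear_combination (z^2-1) * hx
  · intro n ih0 ih1
    show (z^2-1) * (x * dRec x (B^2) (n+1) - B^2 * dRec x (B^2) n) * z^(n+2)
        = B^(n+2) * (z^(2*(n+3)) - 1)
    linear_combination ((z^2-1) * z^(n+1) * dRec x (B^2) (n+1)) * hx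
      + (B*(z^2+1)) * ih1 + (-(B^2)*z^2) * ih0

lemma dRec_deg (ε B : K) (hε : ε^2 = 1) :
    ∀ n, dRec (2*ε*B) (B^2) n = (n+1 : ℕ) * (ε*B)^n := by
  apply two_step
  · simp [dRec]
  · show dRec (2*ε*B) (B^2) 1 = ((1+1:ℕ):K) * (ε*B)^1
    simp only [dRec]
    push_cast
    ring
  · intro n ih0 ih1
    show 2*ε*B * dRec (2*ε*B) (B^2) (n+1) - B^2 * dRec (2*ε*B) (B^2) n = _
    rw [ih0, ih1]
    push_cast
    linear_combination (((n:K)+1)*B^2*(ε*B)^n) * hε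

lemma dzero_iff [IsAlgClosed K] (p : ℕ) [hFp : Fact p.Prime] [CharP K p]
    (n m r : ℕ) (hr : 1 ≤ r) (hnm : n + 1 = p ^ r * (m + 1))
    (B : K) (hB : B ≠ 0) (θ : K) (hθ : IsPrimitiveRoot θ (2 * (m + 1))) (x : K) :
    dRec x (B^2) n = 0 ↔
      ∃ c ∈ (({2, -2} : Set K) ∪ (fun i : ℕ => θ^i + θ⁻¹^i) '' Set.Icc 1 m),
        x = B * c := by
  have hθ0 : θ ≠ 0 := fun h => by
    have := hθ.pow_eq_one; rw [h] at this; simp at this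
  have hchar : ((n + 1 : ℕ) : K) = 0 := by
    rw [CharP.cast_eq_zero_iff K p]
    exact hnm ▸ Dvd.dvd.mul_right (dvd_pow_self p (by omega)) _
  have frob : ∀ u : K, u ^ (p ^ r) = 1 → u = 1 := by
    intro u hu
    have h1 : (u - 1) ^ (p ^ r) = 0 := by
      rw [sub_pow_char_pow, hu, one_pow, sub_self]
    exact sub_eq_zero.mp ((pow_eq_zero_iff (pow_ne_zero r hFp.out.pos.ne')).mp h1)
  have hexp : 2 * (n + 1) = 2 * (m + 1) * p ^ r := by rw [hnm]; ring
  have key : ∀ z : K, z ^ (2 * (n + 1)) = 1 ↔ z ^ (2 * (m + 1)) = 1 := by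
    intro z
    constructor
    · intro h
      exact frob _ (by rw [← pow_mul, ← hexp, h])
    · intro h
      rw [hexp, pow_mul, h, one_pow]
  constructor
  · intro hd
    obtain ⟨z, hz⟩ := IsAlgClosed.exists_root
      (C B * X ^ 2 + C (-x) * X + C B)
      (by rw [Polynomial.degree_quadratic hB]; norm_num)
    have hz' : B * z ^ 2 - x * z + B = 0 := by
      have := hz
      simp only [IsRoot, eval_add, eval_mul, eval_pow, eval_C, eval_X] at this
      linear_combination this
    have hzx : x * z = B * (z ^ 2 + 1) := by linear_combination -hz'
    have hz0 : z ≠ 0 := by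
      intro h; rw [h] at hz'; simp at hz'; exact hB (by linear_combination hz')
    by_cases hz2 : z ^ 2 = 1
    · have hzpm : z = 1 ∨ z = -1 := by
        rcases mul_eq_zero.mp (show (z - 1) * (z + 1) = 0 by linear_combination hz2) with h | h
        · exact Or.inl (by linear_combination h)
        · exact Or.inr (by linear_combination h)
      have hx2 : x = B * (2 * z) := by
        have : x * z * z = B * (z^2+1) * z := by rw [hzx]
        rcases hzpm with h | h <;> rw [h] at this ⊢ <;>
          · ring_nf at this ⊢; linear_combination this
      rcases hzpm with h | h
      · exact ⟨2, Or.inl (by simp), by rw [hx2, h]; ring⟩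
      · exact ⟨-2, Or.inl (by simp), by rw [hx2, h]; ring⟩
    · have hpell := dRec_pell B z x hzx n
      rw [hd, mul_zero, zero_mul] at hpell
      have hzn : z ^ (2 * (n + 1)) = 1 := by
        have hBn : (B : K) ^ n ≠ 0 := pow_ne_zero _ hB
        rcases mul_eq_zero.mp hpell.symm with h | h
        · exact absurd h hBn
        · linear_combination h
      have hzm : z ^ (2 * (m + 1)) = 1 := (key z).mp hzn
      have : NeZero (2 * (m + 1)) := ⟨by omega⟩
      obtain ⟨i, hilt, hiz⟩ := hθ.eq_pow_of_pow_eq_one hzm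
      have hi0 : i ≠ 0 := by
        rintro rfl; rw [pow_zero] at hiz; rw [← hiz] at hz2; simp at hz2
      have him1 : i ≠ m + 1 := by
        rintro rfl
        apply hz2
        rw [← hiz, ← pow_mul]
        have : (m + 1) * 2 = 2 * (m + 1) := by ring
        rw [this, hθ.pow_eq_one]
      have hxz : x = B * (z + z⁻¹) := by field_simp; linear_combination hzx
      by_cases hile : i ≤ m
      · refine ⟨θ ^ i + θ⁻¹ ^ i, Or.inr ⟨i, ⟨by omega, hile⟩, rfl⟩, ?_⟩
        rw [hxz, hiz, inv_pow, hiz]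
      · refine ⟨θ ^ (2 * (m + 1) - i) + θ⁻¹ ^ (2 * (m + 1) - i),
          Or.inr ⟨2 * (m + 1) - i, ⟨by omega, by omega⟩, rfl⟩, ?_⟩
        have hj : θ ^ (2 * (m + 1) - i) = z⁻¹ := by
          rw [← hiz]
          refine eq_inv_of_mul_eq_one_left ?_
          rw [← pow_add]
          have : 2 * (m + 1) - i + i = 2 * (m + 1) := by omega
          rw [this, hθ.pow_eq_one]
        have hj' : θ⁻¹ ^ (2 * (m + 1) - i) = z := by
          rw [inv_pow, hj, inv_inv]
        rw [hxz, hj, hj']; ring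
  · rintro ⟨c, hc, rfl⟩
    rcases hc with (h2 | h2) | ⟨i, ⟨hi1, hi2⟩, rfl⟩
    · subst h2
      have : B * 2 = 2 * (1:K) * B := by ring
      rw [this, dRec_deg 1 B (by norm_num) n]
      push_cast at hchar ⊢
      rw [hchar]; ring
    · simp only [Set.mem_singleton_iff] at h2; subst h2
      have : B * (-2) = 2 * (-1:K) * B := by ring
      rw [this, dRec_deg (-1) B (by norm_num) n]
      push_cast at hchar ⊢
      rw [hchar]; ring
    · set z := θ ^ i with hz
      have hz0 : z ≠ 0 := pow_ne_zero _ hθ0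
      have hxz : B * (θ ^ i + θ⁻¹ ^ i) * z = B * (z ^ 2 + 1) := by
        rw [inv_pow, hz]
        have hzz : (θ ^ i)⁻¹ * θ ^ i = 1 := inv_mul_cancel₀ (pow_ne_zero _ hθ0)
        linear_combination B * hzz
      have hpell := dRec_pell B z _ hxz n
      have hzm : z ^ (2 * (m + 1)) = 1 := by
        rw [hz, ← pow_mul, mul_comm i, pow_mul, hθ.pow_eq_one, one_pow]
      have hzn : z ^ (2 * (n + 1)) = 1 := (key z).mpr hzm
      rw [hzn, sub_self, mul_zero] at hpell
      have hz2 : z ^ 2 ≠ 1 := by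
        rw [hz, ← pow_mul]
        intro h
        have hdvd := (hθ.pow_eq_one_iff_dvd _).mp h
        have := Nat.le_of_dvd (by omega) hdvd
        omega
      rcases mul_eq_zero.mp hpell with h | h
      · rcases mul_eq_zero.mp h with h' | h'
        · exact absurd (by linear_combination h') hz2
        · exact h'
      · exact absurd h (pow_ne_zero _ hz0)

lemma triFactorization (n : ℕ) (A B μ : K) (hμ : μ ^ 2 = -1) :
    (1 : Matrix (Fin n) (Fin n) K) + (triMat n A B) ^ 2 =
      (μ • 1 - triMat n A B) * ((-μ) • 1 - triMat n A B) := by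
  have h1 : (μ • (1 : Matrix (Fin n) (Fin n) K)) * ((-μ) • 1) = 1 := by
    rw [smul_mul_assoc, mul_smul_comm, Matrix.one_mul, smul_smul]
    rw [show μ * -μ = -(μ^2) by ring, hμ, neg_neg, one_smul]
  rw [sub_mul, mul_sub, mul_sub, h1]
  rw [smul_mul_assoc, Matrix.one_mul, mul_smul_comm, Matrix.mul_one]
  rw [pow_two]
  rw [neg_smul]
  abel

lemma smul_sub_tri (n : ℕ) (A B y : K) :
    y • (1 : Matrix (Fin n) (Fin n) K) - triMat n A B = triMat n (y - A) (-B) := by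
  ext i j
  simp only [Matrix.sub_apply, Matrix.smul_apply, Matrix.one_apply, triMat, of_apply,
    smul_eq_mul, mul_ite, mul_one, mul_zero]
  by_cases h : (i : ℕ) = (j : ℕ)
  · have : i = j := Fin.ext h
    simp [this, h]
  · have : ¬ i = j := fun hh => h (by rw [hh])
    simp only [this, if_false, h, zero_sub]
    split_ifs <;> simp

end Aux

set_option maxHeartbeats 2000000 in
/-- Odd characteristic `p`, `b ≠ 0`, `n + 1 = p^r (m+1)` with `r ≥ 1` and
`p ∤ m+1`: if `m > 0` then `Ĉ_n(a,b)` is LCD (equivalently `1 + T̂_n(a,b)^2`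
is invertible) iff `a/b` avoids the four exceptional values
`±μ/b ± 2` and the values `±μ/b + θ^i + θ^{-i}`, `1 ≤ i ≤ m`;
if `m = 0` then `Ĉ_n(a,b)` is LCD iff `a/b` avoids the four exceptional
values. -/
theorem stmt_19 (F : Type*) [Field F] [Fintype F]
    (p : ℕ) [Fact p.Prime] [CharP F p] (hp : Odd p)
    (n m r : ℕ) (hn : 2 ≤ n) (hr : 1 ≤ r)
    (hnm : n + 1 = p ^ r * (m + 1)) (hm : ¬ p ∣ (m + 1))
    (a b : F) (hb : b ≠ 0)
    (μ : AlgebraicClosure F) (hμ : μ ^ 2 = -1)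
    (θ : AlgebraicClosure F) (hθ : IsPrimitiveRoot θ (2 * (m + 1))) :
    (0 < m →
      (IsUnit ((1 : Matrix (Fin n) (Fin n) F) + (triToeplitz F n a b) ^ 2) ↔
        algebraMap F (AlgebraicClosure F) (a / b) ∉
          (({-μ / algebraMap F (AlgebraicClosure F) b + 2,
             -μ / algebraMap F (AlgebraicClosure F) b - 2,
             μ / algebraMap F (AlgebraicClosure F) b + 2,
             μ / algebraMap F (AlgebraicClosure F) b - 2} :
              Set (AlgebraicClosure F)) ∪
           (fun i : ℕ =>
              -μ / algebraMap F (AlgebraicClosure F) b + θ ^ i + θ⁻¹ ^ i) ''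
              (Set.Icc 1 m) ∪
           (fun i : ℕ =>
              μ / algebraMap F (AlgebraicClosure F) b + θ ^ i + θ⁻¹ ^ i) ''
              (Set.Icc 1 m)))) ∧
    (m = 0 →
      (IsUnit ((1 : Matrix (Fin n) (Fin n) F) + (triToeplitz F n a b) ^ 2) ↔
        algebraMap F (AlgebraicClosure F) (a / b) ∉
          ({-μ / algebraMap F (AlgebraicClosure F) b + 2,
            -μ / algebraMap F (AlgebraicClosure F) b - 2,
            μ / algebraMap F (AlgebraicClosure F) b + 2,
            μ / algebraMap F (AlgebraicClosure F) b - 2} :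
             Set (AlgebraicClosure F)))) := by
  classical
  haveI : CharP (AlgebraicClosure F) p :=
    charP_of_injective_algebraMap (algebraMap F (AlgebraicClosure F)).injective p
  set φ : F →+* AlgebraicClosure F := (algebraMap F (AlgebraicClosure F)) with hφ
  set A : AlgebraicClosure F := φ a with hA
  set B : AlgebraicClosure F := φ b with hB
  have hB0 : B ≠ 0 := fun h => hb (φ.injective (h.trans (map_zero φ).symm))
  have hθ0 : θ ≠ 0 := fun h => by
    have := hθ.pow_eq_one; rw [h] at this; simp at this
  set T := triToeplitz F n a b with hT
  set C : Set (AlgebraicClosure F) := ({2, -2} : Set (AlgebraicClosure F)) ∪ (fun i : ℕ => θ^i + θ⁻¹^i) '' Set.Icc 1 m with hC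
  -- Step 1: IsUnit iff the two dRec values are nonzero
  have hmapT : T.map φ = triMat n A B := by
    ext i j
    simp only [Matrix.map_apply, hT, triToeplitz, triMat, Matrix.of_apply, apply_ite φ,
      map_zero]
    rfl
  have hmap : ((1 : Matrix (Fin n) (Fin n) F) + T^2).map φ = 1 + (triMat n A B)^2 := by
    have : ((1 : Matrix (Fin n) (Fin n) F) + T^2).map φ = φ.mapMatrix (1 + T^2) := rfl
    rw [this, map_add, _root_.map_one, map_pow, RingHom.mapMatrix_apply, hmapT]
  have hdet : ((1 : Matrix (Fin n) (Fin n) F) + T^2).det = 0 ↔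
      dRec (μ - A) (B^2) n * dRec (-μ - A) (B^2) n = 0 := by
    have h1 : φ ((1 + T^2).det) = ((1 + T^2).map φ).det := by
      rw [← RingHom.mapMatrix_apply, ← RingHom.map_det]
    have h2 : ((1 + T^2).map φ).det = dRec (μ - A) (B^2) n * dRec (-μ - A) (B^2) n := by
      rw [hmap, triFactorization n A B μ hμ,
        Matrix.det_mul, smul_sub_tri, smul_sub_tri, det_triMat, det_triMat, neg_sq]
    constructor
    · intro h
      rw [← h2, ← h1, h, map_zero]
    · intro h
      have : φ ((1 + T^2).det) = 0 := by rw [h1, h2, h]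
      exact φ.injective (this.trans (map_zero φ).symm)
  have hunit : IsUnit ((1 : Matrix (Fin n) (Fin n) F) + T^2) ↔
      ¬ (dRec (μ - A) (B^2) n = 0 ∨ dRec (-μ - A) (B^2) n = 0) := by
    rw [Matrix.isUnit_iff_isUnit_det, isUnit_iff_ne_zero, ne_eq, hdet, mul_eq_zero]
  -- Step 2: dzero characterizations
  have hz1 := dzero_iff p n m r hr hnm B hB0 θ hθ (μ - A)
  have hz2 := dzero_iff p n m r hr hnm B hB0 θ hθ (-μ - A)
  -- symmetry of C
  have hCneg : ∀ c ∈ C, -c ∈ C := by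
    intro c hc
    rcases hc with (h | h) | ⟨i, ⟨hi1, hi2⟩, rfl⟩
    · rw [h]; exact Or.inl (Or.inr (by norm_num))
    · simp only [Set.mem_singleton_iff] at h; rw [h]; exact Or.inl (Or.inl (by norm_num))
    · have hm1 : θ ^ (m + 1) = -1 := by
        have h2 : (θ ^ (m+1))^2 = 1 := by
          rw [← pow_mul, show (m+1)*2 = 2*(m+1) by ring, hθ.pow_eq_one]
        have hne : θ ^ (m+1) ≠ 1 := by
          intro h
          have hdvd := (hθ.pow_eq_one_iff_dvd _).mp h
          have := Nat.le_of_dvd (by omega) hdvd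
          omega
        rcases mul_eq_zero.mp
            (show (θ^(m+1) - 1) * (θ^(m+1) + 1) = 0 by linear_combination h2) with h|h
        · exact absurd (by linear_combination h) hne
        · linear_combination h
      have hzi : θ^i ≠ 0 := pow_ne_zero _ hθ0
      have hji : θ^(m+1-i) * θ^i = -1 := by
        rw [← pow_add, show m+1-i+i = m+1 by omega, hm1]
      have h1 : θ^(m+1-i) = -(θ^i)⁻¹ := by
        rw [eq_div_of_mul_eq hzi hji, neg_div, one_div]
      have h2 : θ⁻¹^(m+1-i) = -(θ^i) := by
        rw [inv_pow, h1, inv_neg, inv_inv]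
      exact Or.inr ⟨m+1-i, ⟨by omega, by omega⟩, by simp only; rw [h1, h2, inv_pow]; ring⟩
  -- Step 3: translate the root conditions to membership of A/B
  have ht1 : dRec (μ - A) (B^2) n = 0 ↔ ∃ c ∈ C, A / B = μ / B + c := by
    rw [hz1]
    constructor
    · rintro ⟨c, hc, heq⟩
      refine ⟨-c, hCneg c hc, ?_⟩
      field_simp
      linear_combination -heq
    · rintro ⟨c, hc, heq⟩
      refine ⟨-c, hCneg c hc, ?_⟩
      field_simp at heq
      linear_combination -heq
  have ht2 : dRec (-μ - A) (B^2) n = 0 ↔ ∃ c ∈ C, A / B = -(μ / B) + c := by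
    rw [hz2]
    constructor
    · rintro ⟨c, hc, heq⟩
      refine ⟨-c, hCneg c hc, ?_⟩
      field_simp
      linear_combination -heq
    · rintro ⟨c, hc, heq⟩
      refine ⟨-c, hCneg c hc, ?_⟩
      field_simp at heq
      linear_combination -heq
  have hab : φ (a / b) = A / B := by rw [map_div₀]
  -- Step 4: the big set
  have himg : ∀ y : AlgebraicClosure F,
      (fun c => y + c) '' C = ({y + 2, y + -2} : Set (AlgebraicClosure F)) ∪
        (fun i : ℕ => y + (θ^i + θ⁻¹^i)) '' Set.Icc 1 m := by
    intro y
    rw [hC, Set.image_union, Set.image_insert_eq, Set.image_singleton, Set.image_image]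
  have hSet : (({-μ / B + 2, -μ / B - 2, μ / B + 2, μ / B - 2} : Set (AlgebraicClosure F)) ∪
           (fun i : ℕ => -μ / B + θ ^ i + θ⁻¹ ^ i) '' (Set.Icc 1 m) ∪
           (fun i : ℕ => μ / B + θ ^ i + θ⁻¹ ^ i) '' (Set.Icc 1 m)) =
      ((fun c => -(μ / B) + c) '' C) ∪ ((fun c => μ / B + c) '' C) := by
    rw [show (fun i : ℕ => -μ / B + θ ^ i + θ⁻¹ ^ i)
          = (fun i : ℕ => -(μ / B) + (θ^i + θ⁻¹^i)) from by
        funext i; rw [neg_div]; ring]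
    rw [show (fun i : ℕ => μ / B + θ ^ i + θ⁻¹ ^ i)
          = (fun i : ℕ => μ / B + (θ^i + θ⁻¹^i)) from by
        funext i; ring]
    rw [show (-μ / B + 2 : AlgebraicClosure F) = -(μ/B) + 2 from by rw [neg_div]]
    rw [show (-μ / B - 2 : AlgebraicClosure F) = -(μ/B) + -2 from by rw [neg_div]; ring]
    rw [show (μ / B - 2 : AlgebraicClosure F) = μ/B + -2 from by ring]
    rw [himg, himg]
    rw [show ({-(μ/B) + 2, -(μ/B) + -2, μ/B + 2, μ/B + -2} : Set (AlgebraicClosure F))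
          = ({-(μ/B) + 2, -(μ/B) + -2} : Set (AlgebraicClosure F)) ∪ {μ/B + 2, μ/B + -2} from by
        rw [Set.insert_union, Set.singleton_union]]
    have habs : ∀ (S1 S2 P Q : Set (AlgebraicClosure F)),
        ((S1 ∪ S2) ∪ P) ∪ Q = (S1 ∪ P) ∪ (S2 ∪ Q) := by
      intro S1 S2 P Q
      rw [Set.union_assoc S1 S2 P, Set.union_comm S2 P, ← Set.union_assoc S1 P S2,
        Set.union_assoc]
    rw [habs]
  have hor : (dRec (μ - A) (B^2) n = 0 ∨ dRec (-μ - A) (B^2) n = 0) ↔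
      φ (a / b) ∈ (({-μ / B + 2, -μ / B - 2, μ / B + 2, μ / B - 2} :
             Set (AlgebraicClosure F)) ∪
           (fun i : ℕ => -μ / B + θ ^ i + θ⁻¹ ^ i) '' (Set.Icc 1 m) ∪
           (fun i : ℕ => μ / B + θ ^ i + θ⁻¹ ^ i) '' (Set.Icc 1 m)) := by
    rw [hab, hSet, ht1, ht2]
    simp only [Set.mem_union, Set.mem_image]
    constructor
    · rintro (⟨c, hc, heq⟩ | ⟨c, hc, heq⟩)
      · exact Or.inr ⟨c, hc, heq.symm⟩
      · exact Or.inl ⟨c, hc, heq.symm⟩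
    · rintro (⟨c, hc, heq⟩ | ⟨c, hc, heq⟩)
      · exact Or.inr ⟨c, hc, heq.symm⟩
      · exact Or.inl ⟨c, hc, heq.symm⟩
  have main : IsUnit ((1 : Matrix (Fin n) (Fin n) F) + T^2) ↔
      φ (a / b) ∉ (({-μ / B + 2, -μ / B - 2, μ / B + 2, μ / B - 2} :
             Set (AlgebraicClosure F)) ∪
           (fun i : ℕ => -μ / B + θ ^ i + θ⁻¹ ^ i) '' (Set.Icc 1 m) ∪
           (fun i : ℕ => μ / B + θ ^ i + θ⁻¹ ^ i) '' (Set.Icc 1 m)) := by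
    rw [hunit, hor]
  constructor
  · intro _
    exact main
  · intro hm0
    subst hm0
    have himg0 : (Set.Icc 1 0 : Set ℕ) = ∅ := by
      ext i; simp
    rw [himg0, Set.image_empty, Set.image_empty, Set.union_empty, Set.union_empty] at main
    exact main
end
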